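/- Let φ : ℝⁿ × ℝ^d → ℝⁿ and ψ : ℝⁿ → ℝ^d. Assume: (i) φ is contractive in its first argument with constant L < 1, i.e. ‖φ(h, x) − φ(h', x)‖ ≤ L‖h − h'‖ for all h, h', x; (ii) φ is M-Lipschitz in its second argument, i.e. ‖φ(h, x) − φ(h, x')‖ ≤ M‖x − x'‖ for all h, x, x'; (iii) ψ is K-Lipschitz. Let (x_t)_{t ≥ 0} be any input sequence with sup_{t ≥ 0} ‖x_t‖ ≤ C₁, set h_{−1} = 0, h_t = φ(h_{t−1}, x_t) and y_t = ψ(h_t). Then for every t ≥ 0, ‖h_t‖ ≤ (‖φ(0,0)‖ + M·C₁)/(1 − L) and ‖y_t‖ ≤ ‖ψ(0)‖ + K·(‖φ(0,0)‖ + M·C₁)/(1 − L); in particular there exists a constant C₂ with sup_{t ≥ 0} ‖y_t‖ ≤ C₂, i.e. Lipschitz stability implies BIBO stability. -/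

import Mathlib

/-!
The two Lipschitz conditions give `‖φ h x‖ ≤ ‖φ 0 0‖ + L ‖h‖ + M ‖x‖`, so the norms of the hidden
states obey `‖h (t+1)‖ ≤ L ‖h t‖ + c` with `c = ‖φ 0 0‖ + M C₁`. Since `L < 1`, the fixed point
`c / (1 - L)` of `b ↦ L b + c` is an invariant upper bound, and the Lipschitz output map carries
it over to the outputs.
-/

theorem le_div_one_sub_of_le_mul_add {a : ℕ → ℝ} {L c : ℝ} (hL0 : 0 ≤ L) (hL : L < 1)
    (hc : 0 ≤ c) (h0 : a 0 ≤ c) (hstep : ∀ t, a (t + 1) ≤ L * a t + c) (t : ℕ) :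
    a t ≤ c / (1 - L) := by
  have h1L : 0 < 1 - L := by linarith
  have hfix : L * (c / (1 - L)) + c = c / (1 - L) := by field_simp; ring
  induction t with
  | zero => exact h0.trans (le_div_self hc h1L (by linarith))
  | succ t ih =>
    calc a (t + 1) ≤ L * a t + c := hstep t
      _ ≤ L * (c / (1 - L)) + c := by gcongr
      _ = c / (1 - L) := hfix

section

variable {E F G : Type*} [SeminormedAddCommGroup E] [SeminormedAddCommGroup F]
  [SeminormedAddCommGroup G]

theorem norm_apply_le_of_lipschitz_left_right {φ : E → F → E} {L M : ℝ}
    (hcontr : ∀ h h' x, ‖φ h x - φ h' x‖ ≤ L * ‖h - h'‖)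
    (hlipx : ∀ h x x', ‖φ h x - φ h x'‖ ≤ M * ‖x - x'‖) (h : E) (x : F) :
    ‖φ h x‖ ≤ ‖φ 0 0‖ + L * ‖h‖ + M * ‖x‖ := by
  have hdiff : ‖φ h x - φ 0 0‖ ≤ L * ‖h‖ + M * ‖x‖ :=
    calc ‖φ h x - φ 0 0‖ ≤ ‖φ h x - φ 0 x‖ + ‖φ 0 x - φ 0 0‖ :=
          norm_sub_le_norm_sub_add_norm_sub _ _ _
      _ ≤ L * ‖h - 0‖ + M * ‖x - 0‖ := add_le_add (hcontr _ _ _) (hlipx _ _ _)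
      _ = L * ‖h‖ + M * ‖x‖ := by simp only [sub_zero]
  linarith [norm_le_norm_add_norm_sub' (φ h x) (φ 0 0)]

theorem norm_apply_le_of_lipschitz {ψ : E → G} {K B : ℝ} (hK : 0 ≤ K)
    (hlip : ∀ h h', ‖ψ h - ψ h'‖ ≤ K * ‖h - h'‖) {h : E} (hh : ‖h‖ ≤ B) :
    ‖ψ h‖ ≤ ‖ψ 0‖ + K * B :=
  calc ‖ψ h‖ ≤ ‖ψ 0‖ + ‖ψ h - ψ 0‖ := norm_le_norm_add_norm_sub' _ _
    _ ≤ ‖ψ 0‖ + K * ‖h - 0‖ := by gcongr; exact hlip _ _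
    _ ≤ ‖ψ 0‖ + K * B := by rw [sub_zero]; gcongr

theorem norm_state_le_of_contractive {φ : E → F → E} {L M C : ℝ} (hL0 : 0 ≤ L) (hL : L < 1)
    (hM : 0 ≤ M) (hcontr : ∀ h h' x, ‖φ h x - φ h' x‖ ≤ L * ‖h - h'‖)
    (hlipx : ∀ h x x', ‖φ h x - φ h x'‖ ≤ M * ‖x - x'‖)
    {x : ℕ → F} (hx : ∀ t, ‖x t‖ ≤ C) {h : ℕ → E}
    (hinit : h 0 = φ 0 (x 0)) (hrec : ∀ t, h (t + 1) = φ (h t) (x (t + 1))) (t : ℕ) :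
    ‖h t‖ ≤ (‖φ 0 0‖ + M * C) / (1 - L) := by
  have hbound := norm_apply_le_of_lipschitz_left_right hcontr hlipx
  have hMx : ∀ t, M * ‖x t‖ ≤ M * C := fun t => mul_le_mul_of_nonneg_left (hx t) hM
  refine le_div_one_sub_of_le_mul_add (a := fun t => ‖h t‖) hL0 hL ?_ ?_ ?_ t
  · have hC : 0 ≤ C := (norm_nonneg _).trans (hx 0)
    positivity
  · have h0 := hbound 0 (x 0)
    rw [norm_zero, mul_zero, add_zero] at h0
    rw [hinit]
    linarith [hMx 0]
  · intro t
    rw [hrec]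
    linarith [hbound (h t) (x (t + 1)), hMx (t + 1)]

end

/-- Lipschitz stability implies BIBO stability. If the recurrence map `φ` is
contractive in the state with constant `L < 1`, `M`-Lipschitz in the input, and the output
map `ψ` is `K`-Lipschitz, then for any input sequence bounded by `C₁`, the hidden states
(started from the zero state) satisfy `‖h t‖ ≤ (‖φ 0 0‖ + M C₁)/(1 - L)` and the outputs
satisfy `‖y t‖ ≤ ‖ψ 0‖ + K (‖φ 0 0‖ + M C₁)/(1 - L)`; in particular the output sequence is
bounded. -/
theorem lipschitz_stable_implies_bibo (n d : ℕ)
    (φ : EuclideanSpace ℝ (Fin n) → EuclideanSpace ℝ (Fin d) → EuclideanSpace ℝ (Fin n))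
    (ψ : EuclideanSpace ℝ (Fin n) → EuclideanSpace ℝ (Fin d))
    (L M K C₁ : ℝ) (hL0 : 0 ≤ L) (hL : L < 1) (hM : 0 ≤ M) (hK : 0 ≤ K)
    (hcontr : ∀ (h h' : EuclideanSpace ℝ (Fin n)) (x : EuclideanSpace ℝ (Fin d)),
      ‖φ h x - φ h' x‖ ≤ L * ‖h - h'‖)
    (hlipx : ∀ (h : EuclideanSpace ℝ (Fin n)) (x x' : EuclideanSpace ℝ (Fin d)),
      ‖φ h x - φ h x'‖ ≤ M * ‖x - x'‖)
    (hlipψ : ∀ h h' : EuclideanSpace ℝ (Fin n), ‖ψ h - ψ h'‖ ≤ K * ‖h - h'‖)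
    (x : ℕ → EuclideanSpace ℝ (Fin d)) (hx : ∀ t, ‖x t‖ ≤ C₁)
    (h : ℕ → EuclideanSpace ℝ (Fin n))
    (hinit : h 0 = φ 0 (x 0))
    (hrec : ∀ t : ℕ, h (t + 1) = φ (h t) (x (t + 1)))
    (y : ℕ → EuclideanSpace ℝ (Fin d)) (hy : ∀ t, y t = ψ (h t)) :
    (∀ t, ‖h t‖ ≤ (‖φ 0 0‖ + M * C₁) / (1 - L)) ∧
    (∀ t, ‖y t‖ ≤ ‖ψ 0‖ + K * ((‖φ 0 0‖ + M * C₁) / (1 - L))) ∧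
    (∃ C₂ : ℝ, ∀ t, ‖y t‖ ≤ C₂) := by
  have hstate := norm_state_le_of_contractive hL0 hL hM hcontr hlipx hx hinit hrec
  have houtput : ∀ t, ‖y t‖ ≤ ‖ψ 0‖ + K * ((‖φ 0 0‖ + M * C₁) / (1 - L)) := fun t =>
    hy t ▸ norm_apply_le_of_lipschitz hK hlipψ (hstate t)
  exact ⟨hstate, houtput, _, houtput⟩
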